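/- Let μ be a directed distance on a nonempty finite set S. Then each of T_μ, Q_μ, Q_μ^+, and every balanced section R ⊆ Q_μ is geodesic: for every pair of points p, q in the set there exists a continuous map ρ : [0,1] → ℝ^{S^{cr}} (with respect to the Euclidean topology) whose image lies in the set, with ρ(0) = p, ρ(1) = q, and whose directed length from p to q, namely sup{ Σ_{i=0}^{n−1} D_∞(ρ(t_i), ρ(t_{i+1})) : n ≥ 1, 0 = t_0 ≤ t_1 ≤ ⋯ ≤ t_n = 1 }, equals D_∞(p,q). -/

import Mathlib

open scoped BigOperators

/-- Points of `ℝ^{S^{cr}}`: pairs `p = (p^c, p^r)` of functions `S → ℝ`,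
with the componentwise partial order (the product/pi order). -/
abbrev Pt (S : Type*) := (S → ℝ) × (S → ℝ)

/-- `μ` is a directed distance: nonnegative with zero diagonal. -/
def DirDist {S : Type*} (μ : S → S → ℝ) : Prop :=
  (∀ s t, 0 ≤ μ s t) ∧ (∀ s, μ s s = 0)

/-- `d` is a directed metric: a directed distance satisfying the triangle inequality. -/
def DirMetric {V : Type*} (d : V → V → ℝ) : Prop :=
  DirDist d ∧ ∀ x y z, d x z ≤ d x y + d y z

/-- The polyhedron `Π_μ`. -/
def PiP {S : Type*} (μ : S → S → ℝ) : Set (Pt S) :=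
  {p | ∀ s t, μ s t ≤ p.1 s + p.2 t}

/-- The polyhedron `P_μ = Π_μ ∩ ℝ_+^{S^{cr}}`. -/
def PP {S : Type*} (μ : S → S → ℝ) : Set (Pt S) :=
  {p ∈ PiP μ | 0 ≤ p}

/-- The directed tight span `T_μ`: minimal elements of `P_μ`. -/
def TT {S : Type*} (μ : S → S → ℝ) : Set (Pt S) :=
  {p ∈ PP μ | ∀ q ∈ PP μ, q ≤ p → q = p}

/-- `Q_μ`: minimal elements of `Π_μ`. -/
def QQ {S : Type*} (μ : S → S → ℝ) : Set (Pt S) :=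
  {p ∈ PiP μ | ∀ q ∈ PiP μ, q ≤ p → q = p}

/-- `Q_μ^+ = Q_μ ∩ ℝ_+^{S^{cr}}`. -/
def QP {S : Type*} (μ : S → S → ℝ) : Set (Pt S) :=
  QQ μ ∩ {p | 0 ≤ p}

/-- `D_∞^+(f,g) = max_x (g(x) - f(x))_+`. -/
noncomputable def Dplus {X : Type*} [Fintype X] (f g : X → ℝ) : ℝ :=
  ⨆ x, max (g x - f x) 0

/-- `D_∞(p,q) = max ( D_∞^+(p^c,q^c), D_∞^+(q^r,p^r) )`. -/
noncomputable def Dinf {S : Type*} [Fintype S] (p q : Pt S) : ℝ :=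
  max (Dplus p.1 q.1) (Dplus q.2 p.2)

/-- A subset `R` is balanced if no pair `p, q ∈ R` satisfies `p^c < q^c`,
and no pair satisfies `p^r < q^r`. -/
def BalancedSet {S : Type*} (R : Set (Pt S)) : Prop :=
  (¬ ∃ p ∈ R, ∃ q ∈ R, ∀ s, p.1 s < q.1 s) ∧
  (¬ ∃ p ∈ R, ∃ q ∈ R, ∀ s, p.2 s < q.2 s)

/-- The vector `e = (1, -1)` spanning the linearity space of `Π_μ`. -/
def eVec (S : Type*) : Pt S := (fun _ => 1, fun _ => -1)

/-- `R ⊆ Q_μ` is a section: every point of `Q_μ` differs from exactly one point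
of `R` by a multiple of `e`. -/
def IsSection {S : Type*} (μ : S → S → ℝ) (R : Set (Pt S)) : Prop :=
  R ⊆ QQ μ ∧ ∀ q ∈ QQ μ, ∃! p, p ∈ R ∧ ∃ α : ℝ, q - p = α • eVec S

/-- The length of the cycle `(x 0, x 1, …, x m)` with respect to `d`. -/
def cycLen {V : Type*} (d : V → V → ℝ) (m : ℕ) (x : Fin (m + 1) → V) : ℝ :=
  ∑ i, d (x i) (x (i + 1))


/-- The directed length of a path `ρ` from `ρ 0` to `ρ 1`:
the supremum over partitions `0 = t_0 ≤ t_1 ≤ ⋯ ≤ t_n = 1` of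
`Σ_i D_∞(ρ(t_i), ρ(t_{i+1}))`. -/
noncomputable def pathLen {S : Type*} [Fintype S] (ρ : ℝ → Pt S) : ℝ :=
  sSup {L : ℝ | ∃ (n : ℕ) (t : Fin (n + 2) → ℝ), Monotone t ∧
    t 0 = 0 ∧ t (Fin.last (n + 1)) = 1 ∧
    L = ∑ i : Fin (n + 1), Dinf (ρ (t i.castSucc)) (ρ (t i.succ))}

/-- A subset `U` of `ℝ^{S^{cr}}` is geodesic: any `p, q ∈ U` are joined by a
continuous path inside `U` of directed length `D_∞(p,q)` from `p` to `q`. -/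
def IsGeodesicSet {S : Type*} [Fintype S] (U : Set (Pt S)) : Prop :=
  ∀ p ∈ U, ∀ q ∈ U, ∃ ρ : ℝ → Pt S, ContinuousOn ρ (Set.Icc 0 1) ∧
    ρ '' Set.Icc 0 1 ⊆ U ∧ ρ 0 = p ∧ ρ 1 = q ∧ pathLen ρ = Dinf p q

/-!
Let `F c u = max_s (μ s u - c s)`, and `F'` the same transform for the transposed distance.
The minimal points of `Π_μ` are the pairs with `p^r = F p^c` and `p^c = F' p^r`, and those of
`P_μ` are the same with both transforms clipped at `0`. As `F` and `F'` are antitone and commute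
with constant shifts, the condition `c ≤ F' (F c)` singling out such `c` survives maxima and
downward shifts. So the tropical segment `c(t) = max (p^c - t D(q,p), q^c - (1 - t) D(p,q))`,
completed by `F`, runs inside `Q_μ` (clipped at `0`, inside `T_μ`), and each of its steps from
`t` to `t'` costs at most `(t' - t) D(p,q)`: its directed length is `D(p,q)`.
For `Q_μ^+` and for a balanced section the segment is moved along `e` by amounts `γ t` vanishing
at both ends. The step bound then gains the telescoping term `γ t' - γ t`, and what is needed is
that `γ` never drops faster than `D(p,q)`: for a balanced section two of its points cannot be
strictly ordered in all `c`-coordinates, and for `Q_μ^+` the smallest admissible shift is used.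
-/

open Set

theorem Fin.sum_succ_sub_castSucc {M : Type*} [AddCommGroup M] {n : ℕ} (F : Fin (n + 2) → M) :
    ∑ i : Fin (n + 1), (F i.succ - F i.castSucc) = F (Fin.last (n + 1)) - F 0 := by
  induction n with
  | zero => simp
  | succ n ih =>
    have h := ih fun j => F j.castSucc
    simp only [Fin.castSucc_zero, ← Fin.succ_castSucc] at h
    rw [Fin.sum_univ_castSucc, h, Fin.succ_last]
    abel

section Distance

variable {X : Type*} [Fintype X]

theorem Dplus_nonneg (f g : X → ℝ) : 0 ≤ Dplus f g :=
  Real.iSup_nonneg fun _ => le_max_right _ _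

theorem sub_le_Dplus (f g : X → ℝ) (x : X) : g x - f x ≤ Dplus f g :=
  (le_max_left _ _).trans
    (le_ciSup (f := fun x => max (g x - f x) 0) (Set.finite_range _).bddAbove x)

theorem Dplus_le {f g : X → ℝ} {C : ℝ} (hC : 0 ≤ C) (h : ∀ x, g x - f x ≤ C) :
    Dplus f g ≤ C :=
  Real.iSup_le (fun x => max_le (h x) hC) hC

variable {S : Type*}

@[simp]
theorem add_smul_eVec_fst (x : Pt S) (b : ℝ) (s : S) : (x + b • eVec S).1 s = x.1 s + b := by
  simp [eVec]

@[simp]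
theorem add_smul_eVec_snd (x : Pt S) (b : ℝ) (u : S) : (x + b • eVec S).2 u = x.2 u - b := by
  simp [eVec, sub_eq_add_neg]

variable {μ : S → S → ℝ}

theorem add_smul_eVec_mem_PiP_iff {x : Pt S} {b : ℝ} :
    x + b • eVec S ∈ PiP μ ↔ x ∈ PiP μ := by
  simp only [PiP, Set.mem_ofPred_eq, add_smul_eVec_fst, add_smul_eVec_snd]
  ring_nf

theorem add_smul_eVec_mem_QQ {x : Pt S} (hx : x ∈ QQ μ) (b : ℝ) :
    x + b • eVec S ∈ QQ μ := by
  refine ⟨add_smul_eVec_mem_PiP_iff.2 hx.1, fun y hy hyx => ?_⟩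
  have hy' : y + (-b) • eVec S ∈ PiP μ := add_smul_eVec_mem_PiP_iff.2 hy
  have := hx.2 _ hy' (by rw [neg_smul, ← sub_eq_add_neg]; exact sub_le_iff_le_add.2 hyx)
  rw [← this, add_assoc, ← add_smul, neg_add_cancel, zero_smul, add_zero]

variable [Fintype S]

theorem Dinf_nonneg (p q : Pt S) : 0 ≤ Dinf p q :=
  (Dplus_nonneg _ _).trans (le_max_left _ _)

theorem sub_fst_le_Dinf (p q : Pt S) (s : S) : q.1 s - p.1 s ≤ Dinf p q :=
  (sub_le_Dplus _ _ s).trans (le_max_left _ _)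

theorem sub_snd_le_Dinf (p q : Pt S) (u : S) : p.2 u - q.2 u ≤ Dinf p q :=
  (sub_le_Dplus _ _ u).trans (le_max_right _ _)

theorem Dinf_le {p q : Pt S} {C : ℝ} (hC : 0 ≤ C) (h₁ : ∀ s, q.1 s - p.1 s ≤ C)
    (h₂ : ∀ u, p.2 u - q.2 u ≤ C) : Dinf p q ≤ C :=
  max_le (Dplus_le hC h₁) (Dplus_le hC h₂)

theorem Dinf_add_smul_eVec_le {x y : Pt S} {a b C : ℝ} (h : Dinf x y ≤ C)
    (hC : 0 ≤ C + (b - a)) : Dinf (x + a • eVec S) (y + b • eVec S) ≤ C + (b - a) :=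
  Dinf_le hC (fun s => by simp only [add_smul_eVec_fst]; linarith [sub_fst_le_Dinf x y s])
    (fun u => by simp only [add_smul_eVec_snd]; linarith [sub_snd_le_Dinf x y u])

/-- Partition sums telescope against `φ`, and the one-step partition attains `D_∞(p,q)`. -/
theorem pathLen_eq_of_le_sub {ρ : ℝ → Pt S} {p q : Pt S} (φ : ℝ → ℝ) (h₀ : ρ 0 = p)
    (h₁ : ρ 1 = q)
    (hφ : ∀ t ∈ Icc (0 : ℝ) 1, ∀ t' ∈ Icc (0 : ℝ) 1, t ≤ t' →
      Dinf (ρ t) (ρ t') ≤ φ t' - φ t)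
    (hφ₀₁ : φ 1 - φ 0 ≤ Dinf p q) : pathLen ρ = Dinf p q := by
  refine IsGreatest.csSup_eq ⟨⟨0, fun i => (i : ℕ), fun i j hij => Nat.cast_le.2 hij,
    by simp, by simp, by simp [h₀, h₁]⟩, ?_⟩
  rintro L ⟨n, t, ht, ht₀, ht₁, rfl⟩
  have hI : ∀ i, t i ∈ Icc (0 : ℝ) 1 := fun i =>
    ⟨ht₀ ▸ ht (Fin.zero_le i), ht₁ ▸ ht (Fin.le_last i)⟩
  calc ∑ i : Fin (n + 1), Dinf (ρ (t i.castSucc)) (ρ (t i.succ))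
      ≤ ∑ i : Fin (n + 1), (φ (t i.succ) - φ (t i.castSucc)) :=
        Finset.sum_le_sum fun i _ => hφ _ (hI _) _ (hI _) (ht (Fin.castSucc_le_succ i))
    _ = φ 1 - φ 0 := by rw [Fin.sum_succ_sub_castSucc fun i => φ (t i)]; simp [ht₀, ht₁]
    _ ≤ Dinf p q := hφ₀₁

end Distance

section Transform

variable {S : Type*} [Fintype S] [Nonempty S] {μ : S → S → ℝ}

/-- The least `r` with `(c, r) ∈ Π_μ`. -/
noncomputable def cTrans (μ : S → S → ℝ) (c : S → ℝ) (u : S) : ℝ :=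
  Finset.univ.sup' Finset.univ_nonempty fun s => μ s u - c s

noncomputable def cTransPos (μ : S → S → ℝ) (c : S → ℝ) : S → ℝ :=
  cTrans μ c ⊔ 0

theorem le_cTrans (μ : S → S → ℝ) (c : S → ℝ) (s u : S) :
    μ s u - c s ≤ cTrans μ c u :=
  Finset.le_sup' (fun s => μ s u - c s) (Finset.mem_univ s)

theorem cTrans_le_iff {c : S → ℝ} {u : S} {x : ℝ} :
    cTrans μ c u ≤ x ↔ ∀ s, μ s u - c s ≤ x := by
  simp [cTrans, Finset.sup'_le_iff]

theorem mem_PiP_iff_cTrans_le {p : Pt S} : p ∈ PiP μ ↔ cTrans μ p.1 ≤ p.2 := by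
  simp only [Pi.le_def, cTrans_le_iff, PiP, Set.mem_ofPred_eq, sub_le_iff_le_add']
  exact forall_comm

theorem mem_PiP_iff_cTrans_flip_le {p : Pt S} : p ∈ PiP μ ↔ cTrans (flip μ) p.2 ≤ p.1 := by
  simp only [Pi.le_def, cTrans_le_iff, PiP, Set.mem_ofPred_eq, sub_le_iff_le_add, flip]

theorem continuous_cTrans : Continuous (cTrans μ) :=
  continuous_pi fun _ => Continuous.finset_sup'_apply Finset.univ_nonempty fun s _ =>
    continuous_const.sub (continuous_apply s)

theorem continuous_cTransPos : Continuous (cTransPos μ) :=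
  continuous_pi fun u => ((continuous_apply u).comp continuous_cTrans).max continuous_const

end Transform

section ShiftAntitone

variable {S : Type*}

def ShiftAntitone (F : (S → ℝ) → S → ℝ) : Prop :=
  ∀ ⦃c c' : S → ℝ⦄ ⦃C : ℝ⦄, 0 ≤ C → (∀ s, c' s ≤ c s + C) →
    ∀ u, F c u ≤ F c' u + C

variable {F G : (S → ℝ) → S → ℝ}

theorem ShiftAntitone.antitone (hF : ShiftAntitone F) : Antitone F := fun c c' h u => by
  simpa using hF le_rfl (fun s => by simpa using h s) u

theorem ShiftAntitone.sup_zero (hF : ShiftAntitone F) : ShiftAntitone fun c => F c ⊔ 0 :=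
  fun _ c' _ hC h u => by
    simp only [Pi.sup_apply, Pi.zero_apply]
    exact max_le (by linarith [hF hC h u, le_max_left (F c' u) 0])
      (by linarith [le_max_right (F c' u) 0])

theorem shiftAntitone_cTrans [Fintype S] [Nonempty S] (μ : S → S → ℝ) :
    ShiftAntitone (cTrans μ) := fun c c' C _ h u =>
  cTrans_le_iff.2 fun s => by linarith [h s, le_cTrans μ c' s u]

theorem shiftAntitone_cTransPos [Fintype S] [Nonempty S] (μ : S → S → ℝ) :
    ShiftAntitone (cTransPos μ) :=
  (shiftAntitone_cTrans μ).sup_zero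

theorem ShiftAntitone.sub_const_le_comp (hF : ShiftAntitone F) (hG : ShiftAntitone G)
    {c : S → ℝ} (hc : c ≤ G (F c)) {b : ℝ} (hb : 0 ≤ b) :
    (fun s => c s - b) ≤ G (F fun s => c s - b) := fun s => by
  have hFc := hF hb (c := fun s => c s - b) (c' := c) (fun s => by simp)
  linarith [hc s, hG hb (c := F c) hFc s]

end ShiftAntitone

section Minimal

theorem mem_minimal_iff {α β : Type*} [PartialOrder α] [PartialOrder β] {P : Set (α × β)}
    {F : α → β} {G : β → α} (hF : Antitone F) (hG : Antitone G)
    (hPF : ∀ p ∈ P, F p.1 ≤ p.2 ∧ (p.1, F p.1) ∈ P)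
    (hPG : ∀ p ∈ P, G p.2 ≤ p.1 ∧ (G p.2, p.2) ∈ P) {p : α × β} :
    (p ∈ P ∧ ∀ q ∈ P, q ≤ p → q = p) ↔ p ∈ P ∧ p.2 = F p.1 ∧ p.1 = G p.2 := by
  constructor
  · rintro ⟨hp, hmin⟩
    refine ⟨hp, ?_, ?_⟩
    · exact (congrArg Prod.snd (hmin _ (hPF p hp).2 ⟨le_rfl, (hPF p hp).1⟩)).symm
    · exact (congrArg Prod.fst (hmin _ (hPG p hp).2 ⟨(hPG p hp).1, le_rfl⟩)).symm
  · rintro ⟨hp, h₂, h₁⟩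
    refine ⟨hp, fun q hq hqp => Prod.ext (le_antisymm hqp.1 ?_) (le_antisymm hqp.2 ?_)⟩
    · rw [h₁]; exact (hG hqp.2).trans (hPG q hq).1
    · rw [h₂]; exact (hF hqp.1).trans (hPF q hq).1

variable {S : Type*} [Fintype S] [Nonempty S] {μ : S → S → ℝ}

theorem mem_QQ_iff {p : Pt S} :
    p ∈ QQ μ ↔ p ∈ PiP μ ∧ p.2 = cTrans μ p.1 ∧ p.1 = cTrans (flip μ) p.2 :=
  mem_minimal_iff (shiftAntitone_cTrans μ).antitone (shiftAntitone_cTrans (flip μ)).antitone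
    (fun _ hp => ⟨mem_PiP_iff_cTrans_le.1 hp, mem_PiP_iff_cTrans_le.2 le_rfl⟩)
    (fun _ hp => ⟨mem_PiP_iff_cTrans_flip_le.1 hp, mem_PiP_iff_cTrans_flip_le.2 le_rfl⟩)

theorem mem_PP_iff_cTransPos_le {p : Pt S} :
    p ∈ PP μ ↔ cTransPos μ p.1 ≤ p.2 ∧ 0 ≤ p.1 := by
  simp only [PP, Set.mem_ofPred_eq, mem_PiP_iff_cTrans_le, cTransPos, sup_le_iff, Prod.le_def]
  tauto

theorem mem_PP_iff_cTransPos_flip_le {p : Pt S} :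
    p ∈ PP μ ↔ cTransPos (flip μ) p.2 ≤ p.1 ∧ 0 ≤ p.2 := by
  simp only [PP, Set.mem_ofPred_eq, mem_PiP_iff_cTrans_flip_le, cTransPos, sup_le_iff,
    Prod.le_def]
  tauto

theorem mem_TT_iff {p : Pt S} :
    p ∈ TT μ ↔ p ∈ PP μ ∧ p.2 = cTransPos μ p.1 ∧ p.1 = cTransPos (flip μ) p.2 :=
  mem_minimal_iff (shiftAntitone_cTransPos μ).antitone
    (shiftAntitone_cTransPos (flip μ)).antitone
    (fun _ hp => ⟨(mem_PP_iff_cTransPos_le.1 hp).1,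
      mem_PP_iff_cTransPos_le.2 ⟨le_rfl, (mem_PP_iff_cTransPos_le.1 hp).2⟩⟩)
    (fun _ hp => ⟨(mem_PP_iff_cTransPos_flip_le.1 hp).1,
      mem_PP_iff_cTransPos_flip_le.2 ⟨le_rfl, (mem_PP_iff_cTransPos_flip_le.1 hp).2⟩⟩)

theorem mk_cTrans_mem_QQ {c : S → ℝ} (hc : c ≤ cTrans (flip μ) (cTrans μ c)) :
    (c, cTrans μ c) ∈ QQ μ := by
  have hP : (c, cTrans μ c) ∈ PiP μ := mem_PiP_iff_cTrans_le.2 le_rfl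
  exact mem_QQ_iff.2 ⟨hP, rfl, le_antisymm hc (mem_PiP_iff_cTrans_flip_le.1 hP)⟩

theorem mk_cTransPos_mem_TT {c : S → ℝ} (hc₀ : 0 ≤ c)
    (hc : c ≤ cTransPos (flip μ) (cTransPos μ c)) : (c, cTransPos μ c) ∈ TT μ := by
  have hP : (c, cTransPos μ c) ∈ PP μ := mem_PP_iff_cTransPos_le.2 ⟨le_rfl, hc₀⟩
  exact mem_TT_iff.2 ⟨hP, rfl, le_antisymm hc (mem_PP_iff_cTransPos_flip_le.1 hP).1⟩

end Minimal

section Segment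

variable {S : Type*} [Fintype S] {p q : Pt S}

/-- The `c`-part of the tropical segment from `p` to `q`. -/
noncomputable def cPath (p q : Pt S) (t : ℝ) : S → ℝ :=
  fun s => max (p.1 s - t * Dinf q p) (q.1 s - (1 - t) * Dinf p q)

theorem cPath_zero : cPath p q 0 = p.1 := funext fun s => by
  simp only [cPath, zero_mul, sub_zero, one_mul, max_eq_left_iff]
  linarith [sub_fst_le_Dinf p q s]

theorem cPath_one : cPath p q 1 = q.1 := funext fun s => by
  simp only [cPath, one_mul, sub_self, zero_mul, sub_zero, max_eq_right_iff]
  linarith [sub_fst_le_Dinf q p s]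

theorem continuous_cPath : Continuous (cPath p q) :=
  continuous_pi fun _ => by unfold cPath; fun_prop

theorem cPath_sub_cPath_le (t t' : ℝ) (s : S) :
    cPath p q t' s - cPath p q t s ≤ max ((t - t') * Dinf q p) ((t' - t) * Dinf p q) :=
  (max_sub_max_le_max _ _ _ _).trans_eq (by congr 1 <;> ring)

theorem cPath_le_add {t t' : ℝ} (htt' : t ≤ t') (s : S) :
    cPath p q t' s ≤ cPath p q t s + (t' - t) * Dinf p q := by
  have hback : (t - t') * Dinf q p ≤ (t' - t) * Dinf p q := by
    nlinarith [Dinf_nonneg p q, Dinf_nonneg q p]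
  linarith [(cPath_sub_cPath_le (p := p) (q := q) t t' s).trans (max_le hback le_rfl)]

theorem cPath_le_comp {F G : (S → ℝ) → S → ℝ} (hF : ShiftAntitone F)
    (hG : ShiftAntitone G) (hp : p.1 ≤ G (F p.1)) (hq : q.1 ≤ G (F q.1)) {t : ℝ}
    (ht : t ∈ Icc (0 : ℝ) 1) :
    cPath p q t ≤ G (F (cPath p q t)) :=
  (sup_le_sup (hF.sub_const_le_comp hG hp (mul_nonneg ht.1 (Dinf_nonneg q p)))
    (hF.sub_const_le_comp hG hq (mul_nonneg (sub_nonneg.2 ht.2) (Dinf_nonneg p q)))).trans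
    ((hG.antitone.comp hF.antitone).le_map_sup _ _)

theorem Dinf_mk_le {F : (S → ℝ) → S → ℝ} (hF : ShiftAntitone F) {c c' : S → ℝ}
    {C : ℝ} (hC : 0 ≤ C) (h : ∀ s, c' s ≤ c s + C) : Dinf (c, F c) (c', F c') ≤ C :=
  Dinf_le hC (fun s => by linarith [h s]) (fun u => by linarith [hF hC h u])

end Segment

section Paths

variable {S : Type*} [Fintype S] [Nonempty S] {μ : S → S → ℝ} {p q : Pt S}

noncomputable def qPath (μ : S → S → ℝ) (p q : Pt S) (t : ℝ) : Pt S :=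
  (cPath p q t, cTrans μ (cPath p q t))

theorem qPath_zero (hp : p ∈ QQ μ) : qPath μ p q 0 = p := by
  rw [qPath, cPath_zero, ← (mem_QQ_iff.1 hp).2.1]

theorem qPath_one (hq : q ∈ QQ μ) : qPath μ p q 1 = q := by
  rw [qPath, cPath_one, ← (mem_QQ_iff.1 hq).2.1]

theorem continuous_qPath : Continuous (qPath μ p q) :=
  continuous_cPath.prodMk (continuous_cTrans.comp continuous_cPath)

theorem qPath_mem_QQ (hp : p ∈ QQ μ) (hq : q ∈ QQ μ) {t : ℝ} (ht : t ∈ Icc (0 : ℝ) 1) :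
    qPath μ p q t ∈ QQ μ := by
  have fixed : ∀ {x : Pt S}, x ∈ QQ μ →
      x.1 ≤ cTrans (flip μ) (cTrans μ x.1) := fun hx => by
    obtain ⟨-, h₂, h₁⟩ := mem_QQ_iff.1 hx
    rw [← h₂, ← h₁]
  exact mk_cTrans_mem_QQ
    (cPath_le_comp (shiftAntitone_cTrans μ) (shiftAntitone_cTrans _) (fixed hp) (fixed hq) ht)

theorem Dinf_qPath_le {t t' : ℝ} (htt' : t ≤ t') :
    Dinf (qPath μ p q t) (qPath μ p q t') ≤ (t' - t) * Dinf p q :=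
  Dinf_mk_le (shiftAntitone_cTrans μ) (mul_nonneg (sub_nonneg.2 htt') (Dinf_nonneg p q))
    (cPath_le_add htt')

theorem isGeodesicSet_of_shift {U : Set (Pt S)} (hU : U ⊆ QQ μ)
    (h : ∀ p ∈ U, ∀ q ∈ U, ∃ γ : ℝ → ℝ,
      ContinuousOn γ (Icc 0 1) ∧ γ 0 = 0 ∧ γ 1 = 0 ∧
      (∀ t ∈ Icc (0 : ℝ) 1, ∀ t' ∈ Icc (0 : ℝ) 1, t ≤ t' →
        γ t - γ t' ≤ (t' - t) * Dinf p q) ∧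
      ∀ t ∈ Icc (0 : ℝ) 1, qPath μ p q t + γ t • eVec S ∈ U) :
    IsGeodesicSet U := by
  intro p hp q hq
  obtain ⟨γ, hγc, hγ₀, hγ₁, hγ, hγU⟩ := h p hp q hq
  have h₀ : qPath μ p q 0 + γ 0 • eVec S = p := by
    rw [qPath_zero (hU hp), hγ₀, zero_smul, add_zero]
  have h₁ : qPath μ p q 1 + γ 1 • eVec S = q := by
    rw [qPath_one (hU hq), hγ₁, zero_smul, add_zero]
  refine ⟨_, continuous_qPath.continuousOn.add (hγc.smul continuousOn_const),
    image_subset_iff.2 hγU, h₀, h₁,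
    pathLen_eq_of_le_sub (fun t => t * Dinf p q + γ t) h₀ h₁ (fun t ht t' ht' htt' => ?_)
      (by simp [hγ₀, hγ₁])⟩
  have hstep := Dinf_add_smul_eVec_le (a := γ t) (b := γ t') (Dinf_qPath_le (μ := μ) htt')
    (by linarith [hγ t ht t' ht' htt'])
  exact hstep.trans_eq (by ring)

theorem isGeodesicSet_QQ : IsGeodesicSet (QQ μ) :=
  isGeodesicSet_of_shift subset_rfl fun p hp q hq =>
    ⟨0, continuousOn_const, rfl, rfl, fun t _ t' _ htt' => by
      simpa using mul_nonneg (sub_nonneg.2 htt') (Dinf_nonneg p q),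
      fun t ht => by simpa using qPath_mem_QQ hp hq ht⟩

end Paths

section TightSpan

variable {S : Type*} [Fintype S] [Nonempty S] {μ : S → S → ℝ} {p q : Pt S}

noncomputable def tPath (μ : S → S → ℝ) (p q : Pt S) (t : ℝ) : Pt S :=
  (cPath p q t ⊔ 0, cTransPos μ (cPath p q t ⊔ 0))

theorem tPath_zero (hp : p ∈ TT μ) : tPath μ p q 0 = p := by
  obtain ⟨⟨-, hp₀⟩, h₂, -⟩ := mem_TT_iff.1 hp
  have h₀ : (0 : S → ℝ) ≤ p.1 := hp₀.1
  rw [tPath, cPath_zero, sup_eq_left.2 h₀, ← h₂]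

theorem tPath_one (hq : q ∈ TT μ) : tPath μ p q 1 = q := by
  obtain ⟨⟨-, hq₀⟩, h₂, -⟩ := mem_TT_iff.1 hq
  have h₀ : (0 : S → ℝ) ≤ q.1 := hq₀.1
  rw [tPath, cPath_one, sup_eq_left.2 h₀, ← h₂]

theorem tPath_mem_TT (hp : p ∈ TT μ) (hq : q ∈ TT μ) {t : ℝ} (ht : t ∈ Icc (0 : ℝ) 1) :
    tPath μ p q t ∈ TT μ := by
  have hF := shiftAntitone_cTransPos μ
  have hG := shiftAntitone_cTransPos (flip μ)
  have fixed : ∀ {x : Pt S}, x ∈ TT μ →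
      x.1 ≤ cTransPos (flip μ) (cTransPos μ x.1) := fun hx => by
    obtain ⟨-, h₂, h₁⟩ := mem_TT_iff.1 hx
    rw [← h₂, ← h₁]
  have hzero : (0 : S → ℝ) ≤ cTransPos (flip μ) (cTransPos μ 0) := le_sup_right
  exact mk_cTransPos_mem_TT le_sup_right
    ((sup_le_sup (cPath_le_comp hF hG (fixed hp) (fixed hq) ht) hzero).trans
      ((hG.antitone.comp hF.antitone).le_map_sup _ _))

theorem continuous_tPath : Continuous (tPath μ p q) := by
  have hc : Continuous fun t => cPath p q t ⊔ 0 :=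
    continuous_pi fun s => ((continuous_apply s).comp continuous_cPath).max continuous_const
  exact hc.prodMk (continuous_cTransPos.comp hc)

theorem Dinf_tPath_le {t t' : ℝ} (htt' : t ≤ t') :
    Dinf (tPath μ p q t) (tPath μ p q t') ≤ (t' - t) * Dinf p q := by
  have hC : 0 ≤ (t' - t) * Dinf p q := mul_nonneg (sub_nonneg.2 htt') (Dinf_nonneg p q)
  refine Dinf_mk_le (shiftAntitone_cTransPos μ) hC fun s => ?_
  simp only [Pi.sup_apply, Pi.zero_apply]
  have h₁ := cPath_le_add (p := p) (q := q) htt' s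
  have h₂ := le_max_left (cPath p q t s) 0
  have h₃ := le_max_right (cPath p q t s) 0
  exact max_le (by linarith) (by linarith)

theorem isGeodesicSet_TT : IsGeodesicSet (TT μ) := fun p hp q hq =>
  ⟨tPath μ p q, continuous_tPath.continuousOn,
    image_subset_iff.2 fun _ ht => tPath_mem_TT hp hq ht, tPath_zero hp, tPath_one hq,
    pathLen_eq_of_le_sub (fun t => t * Dinf p q) (tPath_zero hp) (tPath_one hq)
      (fun _ _ _ _ htt' => (Dinf_tPath_le htt').trans_eq (by ring)) (by simp)⟩

end TightSpan

section Nonneg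

variable {S : Type*} [Fintype S] [Nonempty S]

/-- The projection of `0` onto the interval `[-min x^c, min x^r]` of shifts along `e` that make
`x` nonnegative. -/
noncomputable def shiftToNonneg (x : Pt S) : ℝ :=
  max (-Finset.univ.inf' Finset.univ_nonempty x.1)
    (min 0 (Finset.univ.inf' Finset.univ_nonempty x.2))

theorem shiftToNonneg_of_nonneg {x : Pt S} (hx : 0 ≤ x) : shiftToNonneg x = 0 := by
  have h₁ : 0 ≤ Finset.univ.inf' Finset.univ_nonempty x.1 :=
    Finset.le_inf' _ _ fun s _ => hx.1 s
  have h₂ : 0 ≤ Finset.univ.inf' Finset.univ_nonempty x.2 :=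
    Finset.le_inf' _ _ fun u _ => hx.2 u
  rw [shiftToNonneg, min_eq_left h₂, max_eq_right (by linarith)]

theorem add_shiftToNonneg_smul_nonneg {x : Pt S} (h : ∀ s u, 0 ≤ x.1 s + x.2 u) :
    0 ≤ x + shiftToNonneg x • eVec S := by
  obtain ⟨s₀, -, hmin⟩ := Finset.exists_mem_eq_inf' Finset.univ_nonempty x.1
  have hlower : -Finset.univ.inf' Finset.univ_nonempty x.1 ≤ shiftToNonneg x := le_max_left _ _
  have hupper : shiftToNonneg x ≤ Finset.univ.inf' Finset.univ_nonempty x.2 :=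
    max_le (Finset.le_inf' _ _ fun u _ => by linarith [h s₀ u]) (min_le_right _ _)
  refine ⟨fun s => ?_, fun u => ?_⟩
  · have hs := Finset.inf'_le x.1 (Finset.mem_univ s)
    simp only [Prod.fst_zero, Pi.zero_apply, add_smul_eVec_fst]
    linarith
  · have hu := Finset.inf'_le x.2 (Finset.mem_univ u)
    simp only [Prod.snd_zero, Pi.zero_apply, add_smul_eVec_snd]
    linarith

theorem shiftToNonneg_sub_le {x x' : Pt S} {C : ℝ} (h : Dinf x x' ≤ C) :
    shiftToNonneg x - shiftToNonneg x' ≤ C := by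
  have hC : 0 ≤ C := (Dinf_nonneg x x').trans h
  have h₁ : Finset.univ.inf' Finset.univ_nonempty x'.1 ≤
      Finset.univ.inf' Finset.univ_nonempty x.1 + C :=
    sub_le_iff_le_add.1 <| Finset.le_inf' _ _ fun s _ => by
      linarith [Finset.inf'_le x'.1 (Finset.mem_univ s), sub_fst_le_Dinf x x' s]
  have h₂ : Finset.univ.inf' Finset.univ_nonempty x.2 ≤
      Finset.univ.inf' Finset.univ_nonempty x'.2 + C :=
    sub_le_iff_le_add.1 <| Finset.le_inf' _ _ fun u _ => by
      linarith [Finset.inf'_le x.2 (Finset.mem_univ u), sub_snd_le_Dinf x x' u]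
  rw [shiftToNonneg, shiftToNonneg, sub_le_iff_le_add]
  have h₃ := le_max_left (-Finset.univ.inf' Finset.univ_nonempty x'.1)
    (min 0 (Finset.univ.inf' Finset.univ_nonempty x'.2))
  have h₄ := le_max_right (-Finset.univ.inf' Finset.univ_nonempty x'.1)
    (min 0 (Finset.univ.inf' Finset.univ_nonempty x'.2))
  have h₅ : min 0 (Finset.univ.inf' Finset.univ_nonempty x.2) ≤
      min 0 (Finset.univ.inf' Finset.univ_nonempty x'.2) + C := by
    rw [← min_add_add_right]
    exact min_le_min (by linarith) h₂
  exact max_le (by linarith) (by linarith)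

theorem continuous_shiftToNonneg : Continuous (shiftToNonneg (S := S)) :=
  (Continuous.finset_inf'_apply _ fun s _ => (continuous_apply s).comp continuous_fst).neg.max
    (continuous_const.min
      (Continuous.finset_inf'_apply _ fun u _ => (continuous_apply u).comp continuous_snd))

theorem isGeodesicSet_QP {μ : S → S → ℝ} (hμ : ∀ s t, 0 ≤ μ s t) :
    IsGeodesicSet (QP μ) :=
  isGeodesicSet_of_shift inter_subset_left fun p hp q hq =>
    ⟨fun t => shiftToNonneg (qPath μ p q t),
      (continuous_shiftToNonneg.comp continuous_qPath).continuousOn,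
      by simp only [qPath_zero hp.1, shiftToNonneg_of_nonneg hp.2],
      by simp only [qPath_one hq.1, shiftToNonneg_of_nonneg hq.2],
      fun t _ t' _ htt' => shiftToNonneg_sub_le (Dinf_qPath_le htt'),
      fun t ht => by
        have hQ := qPath_mem_QQ hp.1 hq.1 ht
        exact ⟨add_smul_eVec_mem_QQ hQ _,
          add_shiftToNonneg_smul_nonneg fun s u => (hμ s u).trans (hQ.1 s u)⟩⟩

end Nonneg

section Sections

variable {S : Type*} {μ : S → S → ℝ} {R : Set (Pt S)}

theorem BalancedSet.exists_fst_le (hR : BalancedSet R) {x y : Pt S} (hx : x ∈ R) (hy : y ∈ R) :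
    ∃ s, x.1 s ≤ y.1 s := by
  by_contra! H
  exact hR.1 ⟨y, hy, x, hx, H⟩

theorem IsSection.exists_add_smul_mem (hR : IsSection μ R) {y : Pt S} (hy : y ∈ QQ μ) :
    ∃ b : ℝ, y + b • eVec S ∈ R := by
  obtain ⟨x, ⟨hx, a, hxa⟩, -⟩ := hR.2 y hy
  exact ⟨-a, by rwa [neg_smul, ← sub_eq_add_neg, ← hxa, sub_sub_cancel]⟩

theorem IsSection.eq_zero_of_add_smul_mem [Nonempty S] (hR : IsSection μ R) {x : Pt S}
    {b : ℝ} (hx : x ∈ R) (hb : x + b • eVec S ∈ R) : b = 0 := by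
  have h := (hR.2 _ (hR.1 hb)).unique ⟨hb, 0, by simp⟩ ⟨hx, b, by simp⟩
  have hs := congrFun (congrArg Prod.fst h) (Classical.arbitrary S)
  simpa using hs

theorem IsSection.isGeodesicSet [Fintype S] [Nonempty S] (hR : IsSection μ R)
    (hbal : BalancedSet R) : IsGeodesicSet R := by
  refine isGeodesicSet_of_shift hR.1 fun p hp q hq => ?_
  have hβ : ∀ t ∈ Icc (0 : ℝ) 1, ∃ b : ℝ, qPath μ p q t + b • eVec S ∈ R :=
    fun t ht => hR.exists_add_smul_mem (qPath_mem_QQ (hR.1 hp) (hR.1 hq) ht)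
  choose! β hβR using hβ
  have hinc : ∀ t ∈ Icc (0 : ℝ) 1, ∀ t' ∈ Icc (0 : ℝ) 1,
      β t - β t' ≤ max ((t - t') * Dinf q p) ((t' - t) * Dinf p q) := fun t ht t' ht' => by
    obtain ⟨s, hs⟩ := hbal.exists_fst_le (hβR t ht) (hβR t' ht')
    simp only [qPath, add_smul_eVec_fst] at hs
    linarith [cPath_sub_cPath_le (p := p) (q := q) t t' s]
  have hD := Dinf_nonneg p q
  have hD' := Dinf_nonneg q p
  refine ⟨β, ?_, ?_, ?_, fun t ht t' ht' htt' => (hinc t ht t' ht').trans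
    (max_le (by nlinarith) le_rfl), hβR⟩
  · refine (LipschitzOnWith.of_le_add_mul' (max (Dinf q p) (Dinf p q))
      fun t ht t' ht' => ?_).continuousOn
    have h₁ : (t - t') * Dinf q p ≤ |t - t'| * max (Dinf q p) (Dinf p q) :=
      mul_le_mul (le_abs_self _) (le_max_left _ _) hD' (abs_nonneg _)
    have h₂ : (t' - t) * Dinf p q ≤ |t - t'| * max (Dinf q p) (Dinf p q) :=
      mul_le_mul ((le_abs_self _).trans_eq (abs_sub_comm t' t)) (le_max_right _ _) hD
        (abs_nonneg _)
    rw [Real.dist_eq]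
    linarith [(hinc t ht t' ht').trans (max_le h₁ h₂)]
  · exact hR.eq_zero_of_add_smul_mem hp
      (by simpa [qPath_zero (hR.1 hp)] using hβR 0 (left_mem_Icc.2 zero_le_one))
  · exact hR.eq_zero_of_add_smul_mem hq
      (by simpa [qPath_one (hR.1 hq)] using hβR 1 (right_mem_Icc.2 zero_le_one))

end Sections

/-- Proposition 2.10.  `T_μ`, `Q_μ`, `Q_μ^+` and every balanced section of
`Q_μ` are geodesic. -/
theorem stmt6 {S : Type*} [Fintype S] [Nonempty S] (μ : S → S → ℝ)
    (hμ : DirDist μ) :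
    IsGeodesicSet (TT μ) ∧ IsGeodesicSet (QQ μ) ∧ IsGeodesicSet (QP μ) ∧
    ∀ R : Set (Pt S), IsSection μ R → BalancedSet R → IsGeodesicSet R :=
  ⟨isGeodesicSet_TT, isGeodesicSet_QQ, isGeodesicSet_QP hμ.1,
    fun _ hR hbal => hR.isGeodesicSet hbal⟩
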